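/- If a homeomorphism f : X → X of a compact metric space has the L-shadowing property, then for each ε > 0 there is δ > 0 such that for each r > 0 there exists k_r ∈ ℕ with the property: whenever d(x,y) < δ, there is a point z ∈ V^s_ε(x) ∩ V^u_ε(y) satisfying f^{k_r}(z) ∈ V^s_r(f^{k_r}(x)) and f^{-k_r}(z) ∈ V^u_r(f^{-k_r}(y)). -/

import Mathlib

open Topology Filter Metric TopologicalSpace

namespace LS

variable {X Y : Type*} [MetricSpace X] [MetricSpace Y]

/-- finite forward iterates of a homeomorphism -/
def hpowAux (f : X ≃ₜ X) : ℕ → X ≃ₜ X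
  | 0 => Homeomorph.refl X
  | n+1 => (hpowAux f n).trans f

/-- `ℤ`-iterates of a homeomorphism: `hpow f k` is the `k`-th iterate `f^k`. -/
def hpow (f : X ≃ₜ X) : ℤ → X ≃ₜ X
  | Int.ofNat n => hpowAux f n
  | Int.negSucc n => (hpowAux f (n+1)).symm

/-- the `ℤ`-iteration map of `f` -/
def F (f : X ≃ₜ X) : ℤ → X → X := fun k => hpow f k

/-- δ-limit-pseudo-orbit for a system given by its iterate family `T` -/
def IsLimitPseudoOrbit (T : ℤ → Y → Y) (δ : ℝ) (x : ℤ → Y) : Prop :=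
  (∀ k : ℤ, dist (T 1 (x k)) (x (k+1)) ≤ δ) ∧
  Tendsto (fun k : ℤ => dist (T 1 (x k)) (x (k+1))) (cocompact ℤ) (𝓝 0)

/-- `z` ε-limit-shadows the sequence `x` -/
def LimitShadows (T : ℤ → Y → Y) (ε : ℝ) (x : ℤ → Y) (z : Y) : Prop :=
  (∀ k : ℤ, dist (T k z) (x k) ≤ ε) ∧
  Tendsto (fun k : ℤ => dist (T k z) (x k)) (cocompact ℤ) (𝓝 0)

/-- the L-shadowing property -/
def LShadowing (T : ℤ → Y → Y) : Prop :=
  ∀ ε > (0:ℝ), ∃ δ > (0:ℝ), ∀ x : ℤ → Y, IsLimitPseudoOrbit T δ x → ∃ z, LimitShadows T ε x z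

/-- the shadowing property -/
def Shadowing (T : ℤ → Y → Y) : Prop :=
  ∀ ε > (0:ℝ), ∃ δ > (0:ℝ), ∀ x : ℤ → Y,
    (∀ k : ℤ, dist (T 1 (x k)) (x (k+1)) < δ) → ∃ z, ∀ k : ℤ, dist (T k z) (x k) < ε

/-- local c-stable set -/
def Ws (f : X ≃ₜ X) (c : ℝ) (x : X) : Set X :=
  {y | ∀ k : ℤ, 0 ≤ k → dist (F f k y) (F f k x) ≤ c}

/-- local c-unstable set -/
def Wu (f : X ≃ₜ X) (c : ℝ) (x : X) : Set X :=
  {y | ∀ k : ℤ, k ≤ 0 → dist (F f k y) (F f k x) ≤ c}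

/-- stable set -/
def WsA (f : X ≃ₜ X) (x : X) : Set X :=
  {y | Tendsto (fun k : ℤ => dist (F f k y) (F f k x)) atTop (𝓝 0)}

/-- unstable set -/
def WuA (f : X ≃ₜ X) (x : X) : Set X :=
  {y | Tendsto (fun k : ℤ => dist (F f k y) (F f k x)) atBot (𝓝 0)}

/-- asymptotic local stable set -/
def Vs (f : X ≃ₜ X) (c : ℝ) (x : X) : Set X := WsA f x ∩ Ws f c x

/-- asymptotic local unstable set -/
def Vu (f : X ≃ₜ X) (c : ℝ) (x : X) : Set X := WuA f x ∩ Wu f c x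

/-- image of a nonempty compact set under a homeomorphism -/
def himg (f : X ≃ₜ X) (A : NonemptyCompacts X) : NonemptyCompacts X :=
  ⟨⟨f '' A, A.isCompact.image f.continuous⟩, A.nonempty.image f⟩

/-- the `ℤ`-iteration family of the induced hyperspace map `2^f` -/
def HF (f : X ≃ₜ X) : ℤ → NonemptyCompacts X → NonemptyCompacts X :=
  fun k A => himg (hpow f k) A

end LS

/-!
Gluing the backward orbit of `b` to the forward orbit of `a` gives a limit pseudo-orbit when
`d(a, b)` is small, and its L-shadowing point lies in `V^s(a) ∩ V^u(b)`. Such a point `z` is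
eventually close to the orbits of `a` and `b`, say outside `(-K, K)`; for `(x, y)` near `(a, b)`
the orbit of `z` on `(-K, K)` glued to the backward orbit of `y` and the forward orbit of `x` is
again a limit pseudo-orbit, with jumps as small as we like, and its L-shadowing point at scale `r`
works for every time `k ≥ K`. So `K` is locally uniform in `(x, y)`, and compactness of
`{d(x, y) ≤ δ}` makes it uniform.
-/

theorem IsCompact.eventually_forall_of_forall_eventually_prod {α Y : Type*}
    [TopologicalSpace Y] {K : Set Y} (hK : IsCompact K) {l : Filter α} {P : α → Y → Prop}
    (hP : ∀ y ∈ K, ∀ᶠ q : α × Y in l ×ˢ 𝓝 y, P q.1 q.2) : ∀ᶠ a in l, ∀ y ∈ K, P a y :=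
  Filter.Eventually.curry (p := fun q => P q.1 q.2) (hK.mem_prod_nhdsSet_of_forall hP)
    |>.mono fun _ h => h.self_of_nhdsSet

namespace LS

section Iterates

variable {X : Type*} [MetricSpace X] (f : X ≃ₜ X)

lemma hpowAux_eq_pow (n : ℕ) : hpowAux f n = f ^ n := by
  induction n with
  | zero => rfl
  | succ n ih => rw [pow_succ', ← ih]; rfl

lemma F_eq_zpow (k : ℤ) : F f k = ⇑(f ^ k) := by
  cases k with
  | ofNat n => exact congrArg DFunLike.coe (hpowAux_eq_pow f n)
  | negSucc n =>
    rw [zpow_negSucc, ← hpowAux_eq_pow]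
    rfl

@[simp]
lemma F_zero (x : X) : F f 0 x = x := rfl

lemma F_add (m n : ℤ) (x : X) : F f (m + n) x = F f m (F f n x) := by
  simp only [F_eq_zpow, zpow_add, Homeomorph.mul_apply]

lemma F_one_F (n : ℤ) (x : X) : F f 1 (F f n x) = F f (n + 1) x := by
  rw [← F_add, add_comm]

lemma continuous_F (k : ℤ) : Continuous (F f k) := (hpow f k).continuous

lemma eventually_forall_dist_F_le (x : X) {s : Set ℤ} (hs : s.Finite) {η : ℝ} (hη : 0 < η) :
    ∀ᶠ y in 𝓝 x, ∀ n ∈ s, dist (F f n x) (F f n y) ≤ η :=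
  (eventually_all_finite hs).2 fun n _ =>
    ((continuous_F f n).tendsto x).eventually (closedBall_mem_nhds _ hη) |>.mono
      fun _ => mem_closedBall'.1

end Iterates

section InvariantSets

variable {X : Type*} [MetricSpace X] {f : X ≃ₜ X}

lemma Vs_mono {c c' : ℝ} (h : c ≤ c') (x : X) : Vs f c x ⊆ Vs f c' x :=
  fun _ hy => ⟨hy.1, fun n hn => (hy.2 n hn).trans h⟩

lemma Vu_mono {c c' : ℝ} (h : c ≤ c') (x : X) : Vu f c x ⊆ Vu f c' x :=
  fun _ hy => ⟨hy.1, fun n hn => (hy.2 n hn).trans h⟩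

lemma F_mem_Vs {w x : X} {c : ℝ} {m : ℤ} (hw : w ∈ WsA f x)
    (h : ∀ n, m ≤ n → dist (F f n w) (F f n x) ≤ c) : F f m w ∈ Vs f c (F f m x) := by
  refine ⟨?_, fun n hn => ?_⟩
  · simp only [WsA, Set.mem_ofPred_eq, ← F_add]
    exact hw.comp (tendsto_atTop_add_const_right _ m tendsto_id)
  · rw [← F_add, ← F_add]
    exact h _ (by omega)

lemma F_mem_Vu {w y : X} {c : ℝ} {m : ℤ} (hw : w ∈ WuA f y)
    (h : ∀ n, n ≤ m → dist (F f n w) (F f n y) ≤ c) : F f m w ∈ Vu f c (F f m y) := by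
  refine ⟨?_, fun n hn => ?_⟩
  · simp only [WuA, Set.mem_ofPred_eq, ← F_add]
    exact hw.comp (tendsto_atBot_add_const_right _ m tendsto_id)
  · rw [← F_add, ← F_add]
    exact h _ (by omega)

end InvariantSets

section PseudoOrbits

variable {X : Type*} [MetricSpace X] (f : X ≃ₜ X)

lemma isLimitPseudoOrbit_of_finite {c : ℤ → X} {s : Set ℤ} (hs : s.Finite)
    (hc : ∀ n ∉ s, c (n + 1) = c n) {δ : ℝ} (hδ₀ : 0 ≤ δ)
    (hδ : ∀ n ∈ s, dist (F f (n + 1) (c n)) (F f (n + 1) (c (n + 1))) ≤ δ) :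
    IsLimitPseudoOrbit (F f) δ (fun n => F f n (c n)) := by
  have hjump : ∀ n ∉ s, dist (F f 1 (F f n (c n))) (F f (n + 1) (c (n + 1))) = 0 := by
    intro n hn
    rw [F_one_F, hc n hn, dist_self]
  refine ⟨fun n => ?_, ?_⟩
  · by_cases hn : n ∈ s
    · rw [F_one_F]
      exact hδ n hn
    · rw [hjump n hn]
      exact hδ₀
  · refine tendsto_const_nhds.congr' ?_
    filter_upwards [hs.isCompact.compl_mem_cocompact] with n hn
    exact (hjump n hn).symm

/-- `n ↦ F f n (itinerary K x z y n)` follows the orbit of `y` up to time `-K`, that of `z`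
strictly between, and that of `x` from time `K` on. -/
def itinerary (K : ℕ) (x z y : X) (n : ℤ) : X :=
  if (K : ℤ) ≤ n then x else if n ≤ -K then y else z

variable {f}

lemma isLimitPseudoOrbit_itinerary {K : ℕ} (hK : 0 < K) {x z y : X} {δ : ℝ}
    (hx : dist (F f K z) (F f K x) ≤ δ) (hy : dist (F f (1 - K) y) (F f (1 - K) z) ≤ δ) :
    IsLimitPseudoOrbit (F f) δ (fun n => F f n (itinerary K x z y n)) := by
  refine isLimitPseudoOrbit_of_finite f (s := {(K : ℤ) - 1, -(K : ℤ)}) (by simp)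
    (fun n hn => ?_) (dist_nonneg.trans hx) ?_
  · simp only [Set.mem_insert_iff, Set.mem_singleton_iff, not_or] at hn
    simp only [itinerary]
    split_ifs <;> first | rfl | omega
  · simp only [Set.mem_insert_iff, Set.mem_singleton_iff]
    rintro n (rfl | rfl)
    · simp only [itinerary, sub_add_cancel]
      rw [if_neg (by omega), if_neg (by omega), if_pos le_rfl]
      exact hx
    · rw [neg_add_eq_sub]
      simp only [itinerary]
      rw [if_neg (by omega), if_pos le_rfl, if_neg (by omega), if_neg (by omega)]
      exact hy

lemma LimitShadows.mem_WsA {ρ : ℝ} {c : ℤ → X} {w x : X}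
    (hw : LimitShadows (F f) ρ (fun n => F f n (c n)) w) (hc : ∀ᶠ n in atTop, c n = x) :
    w ∈ WsA f x := by
  refine (hw.2.mono_left ?_).congr' ?_
  · rw [cocompact_eq_atBot_atTop]
    exact le_sup_right
  · filter_upwards [hc] with n hn
    rw [hn]

lemma LimitShadows.mem_WuA {ρ : ℝ} {c : ℤ → X} {w y : X}
    (hw : LimitShadows (F f) ρ (fun n => F f n (c n)) w) (hc : ∀ᶠ n in atBot, c n = y) :
    w ∈ WuA f y := by
  refine (hw.2.mono_left ?_).congr' ?_
  · rw [cocompact_eq_atBot_atTop]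
    exact le_sup_left
  · filter_upwards [hc] with n hn
    rw [hn]

variable {K : ℕ} {x z y w : X} {ρ : ℝ}

lemma mem_Vs_of_limitShadows_itinerary (hK : 0 < K)
    (hw : LimitShadows (F f) ρ (fun n => F f n (itinerary K x z y n)) w) {α : ℝ}
    (hz : ∀ n : ℤ, 0 ≤ n → n < K → dist (F f n z) (F f n x) ≤ α) :
    w ∈ Vs f (ρ + α) x ∧ ∀ k : ℕ, K ≤ k → F f k w ∈ Vs f ρ (F f k x) := by
  have hfut : ∀ n : ℤ, K ≤ n → dist (F f n w) (F f n x) ≤ ρ := fun n hn => by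
    simpa [itinerary, hn] using hw.1 n
  have hWsA : w ∈ WsA f x := hw.mem_WsA <| by
    filter_upwards [eventually_ge_atTop (K : ℤ)] with n hn
    simp [itinerary, hn]
  have hα : 0 ≤ α := dist_nonneg.trans (hz 0 le_rfl (by omega))
  refine ⟨⟨hWsA, fun n hn => ?_⟩, fun k hk => F_mem_Vs hWsA fun n hn => hfut n (by omega)⟩
  by_cases hKn : (K : ℤ) ≤ n
  · linarith [hfut n hKn]
  · have hmid : dist (F f n w) (F f n z) ≤ ρ := by
      simpa [itinerary, hKn, show ¬ n ≤ -K by omega] using hw.1 n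
    calc dist (F f n w) (F f n x) ≤ dist (F f n w) (F f n z) + dist (F f n z) (F f n x) :=
          dist_triangle _ _ _
      _ ≤ ρ + α := add_le_add hmid (hz n hn (by omega))

lemma mem_Vu_of_limitShadows_itinerary (hK : 0 < K)
    (hw : LimitShadows (F f) ρ (fun n => F f n (itinerary K x z y n)) w) {β : ℝ}
    (hz : ∀ n : ℤ, -K < n → n ≤ 0 → dist (F f n z) (F f n y) ≤ β) :
    w ∈ Vu f (ρ + β) y ∧ ∀ k : ℕ, K ≤ k → F f (-(k : ℤ)) w ∈ Vu f ρ (F f (-(k : ℤ)) y) := by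
  have hpast : ∀ n : ℤ, n ≤ -K → dist (F f n w) (F f n y) ≤ ρ := fun n hn => by
    simpa [itinerary, hn, show ¬ (K : ℤ) ≤ n by omega] using hw.1 n
  have hWuA : w ∈ WuA f y := hw.mem_WuA <| by
    filter_upwards [eventually_le_atBot (-(K : ℤ))] with n hn
    simp [itinerary, hn, show ¬ (K : ℤ) ≤ n by omega]
  have hβ : 0 ≤ β := dist_nonneg.trans (hz 0 (by omega) le_rfl)
  refine ⟨⟨hWuA, fun n hn => ?_⟩, fun k hk => F_mem_Vu hWuA fun n hn => hpast n (by omega)⟩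
  by_cases hKn : n ≤ -K
  · linarith [hpast n hKn]
  · have hmid : dist (F f n w) (F f n z) ≤ ρ := by
      simpa [itinerary, hKn, show ¬ (K : ℤ) ≤ n by omega] using hw.1 n
    calc dist (F f n w) (F f n y) ≤ dist (F f n w) (F f n z) + dist (F f n z) (F f n y) :=
          dist_triangle _ _ _
      _ ≤ ρ + β := add_le_add hmid (hz n (by omega) hn)

end PseudoOrbits

section Bracket

variable {X : Type*} [MetricSpace X] {f : X ≃ₜ X}

lemma exists_mem_Vs_inter_Vu {ε δ : ℝ}
    (hsh : ∀ ξ, IsLimitPseudoOrbit (F f) δ ξ → ∃ z, LimitShadows (F f) ε ξ z) {a b : X}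
    (hab : dist a b ≤ δ) : ∃ z, z ∈ Vs f ε a ∧ z ∈ Vu f (ε + dist a b) b := by
  obtain ⟨z, hz⟩ := hsh _ <| isLimitPseudoOrbit_itinerary one_pos (x := a) (z := a) (y := b)
    (by rw [dist_self]; exact dist_nonneg.trans hab) (by simpa [dist_comm] using hab)
  refine ⟨z, ?_, ?_⟩
  · simpa using (mem_Vs_of_limitShadows_itinerary one_pos hz (α := 0) (by simp)).1
  · refine (mem_Vu_of_limitShadows_itinerary one_pos hz fun n h₁ h₂ => ?_).1
    obtain rfl : n = 0 := by omega
    simp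

lemma exists_nat_dist_F_le {a b z : X} (hza : z ∈ WsA f a) (hzb : z ∈ WuA f b) {θ : ℝ}
    (hθ : 0 < θ) : ∃ K : ℕ, (∀ n : ℤ, K ≤ n → dist (F f n z) (F f n a) ≤ θ) ∧
      ∀ n : ℤ, n ≤ -K → dist (F f n z) (F f n b) ≤ θ :=
  ((tendsto_natCast_atTop_atTop.eventually
      (eventually_forall_ge_atTop.2 (hza.eventually (Iic_mem_nhds hθ)))).and
    ((tendsto_neg_atTop_atBot.comp tendsto_natCast_atTop_atTop).eventually
      (eventually_forall_le_atBot.2 (hzb.eventually (Iic_mem_nhds hθ))))).exists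

def IsBracketPoint (f : X ≃ₜ X) (ε r : ℝ) (k : ℕ) (x y z : X) : Prop :=
  z ∈ Vs f ε x ∩ Vu f ε y ∧ F f k z ∈ Vs f r (F f k x) ∧
    F f (-(k : ℤ)) z ∈ Vu f r (F f (-(k : ℤ)) y)

lemma eventually_exists_isBracketPoint (hL : LShadowing (F f)) {ε α β r : ℝ} {a b z : X}
    (hza : z ∈ Vs f α a) (hzb : z ∈ Vu f β b) (hα : α < ε) (hβ : β < ε) (hr : 0 < r) :
    ∀ᶠ q : ℕ × (X × X) in atTop ×ˢ 𝓝 (a, b), ∃ w, IsBracketPoint f ε r q.1 q.2.1 q.2.2 w := by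
  set γ := min (ε - α) (ε - β)
  have hγ : 0 < γ := lt_min (sub_pos.2 hα) (sub_pos.2 hβ)
  obtain ⟨δ, hδ, hsh⟩ := hL (min r (γ / 2)) (by positivity)
  set η := min (δ / 2) (γ / 2)
  obtain ⟨K, hKa, hKb⟩ := exists_nat_dist_F_le hza.1 hzb.1 (half_pos hδ)
  have hη : 0 < η := lt_min (half_pos hδ) (half_pos hγ)
  have hnear :=
    (eventually_forall_dist_F_le f a (Set.finite_Icc (-(K + 1 : ℤ)) (K + 1)) hη).prod_nhds
      (eventually_forall_dist_F_le f b (Set.finite_Icc (-(K + 1 : ℤ)) (K + 1)) hη)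
  filter_upwards [(eventually_ge_atTop (K + 1)).prod_mk hnear]
  rintro ⟨k, x, y⟩ ⟨hk, hx, hy⟩
  have hηδ : η ≤ δ / 2 := min_le_left _ _
  have hηγ : η ≤ γ / 2 := min_le_right _ _
  have hjump_x : dist (F f (K + 1 : ℕ) z) (F f (K + 1 : ℕ) x) ≤ δ := by
    push_cast
    linarith [dist_triangle (F f (K + 1) z) (F f (K + 1) a) (F f (K + 1) x),
      hKa (K + 1) (by omega), hx (K + 1) ⟨by omega, le_rfl⟩]
  have hjump_y : dist (F f (1 - (K + 1 : ℕ)) y) (F f (1 - (K + 1 : ℕ)) z) ≤ δ := by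
    rw [show (1 : ℤ) - (K + 1 : ℕ) = -K by push_cast; ring, dist_comm]
    linarith [dist_triangle (F f (-K) z) (F f (-K) b) (F f (-K) y), hKb (-K) le_rfl,
      hy (-K) ⟨by omega, by omega⟩]
  obtain ⟨w, hw⟩ := hsh _ (isLimitPseudoOrbit_itinerary K.succ_pos hjump_x hjump_y)
  have hs := mem_Vs_of_limitShadows_itinerary K.succ_pos hw (α := α + η) fun n h₀ hn =>
    (dist_triangle _ (F f n a) _).trans (add_le_add (hza.2 n h₀) (hx n ⟨by omega, by omega⟩))
  have hu := mem_Vu_of_limitShadows_itinerary K.succ_pos hw (β := β + η) fun n hn h₀ =>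
    (dist_triangle _ (F f n b) _).trans (add_le_add (hzb.2 n h₀) (hy n ⟨by omega, by omega⟩))
  have hρ : min r (γ / 2) ≤ γ / 2 := min_le_right _ _
  have hγα : γ ≤ ε - α := min_le_left _ _
  have hγβ : γ ≤ ε - β := min_le_right _ _
  exact ⟨w, ⟨Vs_mono (by linarith) _ hs.1, Vu_mono (by linarith) _ hu.1⟩,
    Vs_mono (min_le_left _ _) _ (hs.2 k hk), Vu_mono (min_le_left _ _) _ (hu.2 k hk)⟩

end Bracket

end LS

/-- uniformity in the asymptotic local-product-structure. -/
theorem stmt_2 {X : Type*} [MetricSpace X] [CompactSpace X] (f : X ≃ₜ X)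
    (h : LS.LShadowing (LS.F f)) :
    ∀ ε > (0:ℝ), ∃ δ > (0:ℝ), ∀ r > (0:ℝ), ∃ k : ℕ, 0 < k ∧
      ∀ x y : X, dist x y < δ →
        ∃ z, z ∈ LS.Vs f ε x ∩ LS.Vu f ε y ∧
          LS.F f k z ∈ LS.Vs f r (LS.F f k x) ∧
          LS.F f (-(k:ℤ)) z ∈ LS.Vu f r (LS.F f (-(k:ℤ)) y) := by
  intro ε hε
  obtain ⟨δ₀, hδ₀, hsh⟩ := h (ε / 2) (half_pos hε)
  refine ⟨min δ₀ (ε / 4), by positivity, fun r hr => ?_⟩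
  have hS : IsCompact {p : X × X | dist p.1 p.2 ≤ min δ₀ (ε / 4)} :=
    (isClosed_le continuous_dist continuous_const).isCompact
  have hgood := hS.eventually_forall_of_forall_eventually_prod (l := atTop)
    (P := fun k p => ∃ w, LS.IsBracketPoint f ε r k p.1 p.2 w) fun p hp => by
      have hp₀ : dist p.1 p.2 ≤ δ₀ := hp.trans (min_le_left _ _)
      have hpε : dist p.1 p.2 ≤ ε / 4 := hp.trans (min_le_right _ _)
      obtain ⟨z, hza, hzb⟩ := LS.exists_mem_Vs_inter_Vu hsh hp₀
      exact LS.eventually_exists_isBracketPoint h hza hzb (by linarith) (by linarith) hr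
  obtain ⟨k, hk, hk₀⟩ := (hgood.and (eventually_gt_atTop 0)).exists
  exact ⟨k, hk₀, fun x y hxy => hk (x, y) hxy.le⟩
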